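/- Let H be a real Hilbert space, I = {1,...,n}, μ > 0, and for each i ∈ I let λ_i > 0 with Σ_{i∈I} λ_i = 1 and let A_i : H ⇉ H be maximally monotone. If there exists i₀ ∈ I such that A_{i₀} is disjointly injective (i.e., A_{i₀}x ∩ A_{i₀}y = ∅ whenever x ≠ y), then R_μ(A, λ) is disjointly injective. -/

import Mathlib

open RealInnerProductSpace

namespace SVP

variable {H : Type*} [NormedAddCommGroup H] [InnerProductSpace ℝ H]

/-- Inverse of a set-valued mapping: `x ∈ inv A u ↔ u ∈ A x`. -/
def inv (A : H → Set H) : H → Set H := fun u => {x | u ∈ A x}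

/-- Pointwise (Minkowski) sum of two set-valued mappings. -/
def add (A B : H → Set H) : H → Set H := fun x => {w | ∃ u ∈ A x, ∃ v ∈ B x, w = u + v}

/-- Pointwise difference of two set-valued mappings. -/
def sub (A B : H → Set H) : H → Set H := fun x => {w | ∃ u ∈ A x, ∃ v ∈ B x, w = u - v}

/-- Pointwise scalar multiple of a set-valued mapping. -/
def smul (c : ℝ) (A : H → Set H) : H → Set H := fun x => (fun u => c • u) '' A x

/-- The identity as a set-valued mapping. -/
def id' : H → Set H := fun x => {x}

/-- Composition of set-valued mappings: `(comp A B) x = ⋃ y ∈ B x, A y`. -/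
def comp (A B : H → Set H) : H → Set H := fun x => ⋃ y ∈ B x, A y

/-- Weighted pointwise (Minkowski) combination `Σ_i lam i • (B i)`. -/
def lcomb {n : ℕ} (lam : Fin n → ℝ) (B : Fin n → H → Set H) : H → Set H :=
  fun x => {u | ∃ v : Fin n → H, (∀ i, v i ∈ B i x) ∧ u = ∑ i, lam i • v i}

/-- The `λ`-weighted resolvent average with parameter `μ`:
`R_μ(A, λ) = (Σ_i λ_i (A_i + μ⁻¹ Id)⁻¹)⁻¹ − μ⁻¹ Id`. -/
def resAvg {n : ℕ} (μ : ℝ) (lam : Fin n → ℝ) (A : Fin n → H → Set H) : H → Set H :=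
  sub (inv (lcomb lam (fun i => inv (add (A i) (smul μ⁻¹ id'))))) (smul μ⁻¹ id')

/-- Monotonicity of a set-valued mapping. -/
def IsMonotone (A : H → Set H) : Prop :=
  ∀ ⦃x y u v : H⦄, u ∈ A x → v ∈ A y → 0 ≤ ⟪x - y, u - v⟫

/-- Maximal monotonicity: the graph is not properly contained in the graph of
another monotone mapping. -/
def IsMaxMonotone (A : H → Set H) : Prop :=
  IsMonotone A ∧ ∀ B : H → Set H, IsMonotone B → (∀ x, A x ⊆ B x) → ∀ x, B x ⊆ A x

/-- Domain of a set-valued mapping. -/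
def dom (A : H → Set H) : Set H := {x | (A x).Nonempty}

/-- Range of a set-valued mapping. -/
def ran (A : H → Set H) : Set H := {u | ∃ x, u ∈ A x}

/-- Graph of a set-valued mapping. -/
def graph (A : H → Set H) : Set (H × H) := {p | p.2 ∈ A p.1}

end SVP

variable {H : Type*} [NormedAddCommGroup H] [InnerProductSpace ℝ H] [CompleteSpace H]

/-- `A` is disjointly injective if `A x ∩ A y = ∅` for all distinct `x, y`. -/
def DisjointlyInjective (A : H → Set H) : Prop :=
  ∀ ⦃x y : H⦄, x ≠ y → A x ∩ A y = ∅

/-!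
Write `u ∈ R_μ(A, λ) x` as `x = Σ λ_i v_i` with `u + μ⁻¹ (x - v_i) ∈ A_i v_i`. If `u` also lies in
`R_μ(A, λ) y`, with points `v'_i`, put `d_i = v_i - v'_i`, so that `Σ λ_i d_i = x - y`. Monotonicity
of `A_i` gives `‖d_i‖² ≤ ⟪d_i, x - y⟫`, hence the weighted variance
`Σ λ_i ‖d_i - (x - y)‖² = Σ λ_i ‖d_i‖² - ‖x - y‖²` is `≤ 0` and `d_i = x - y` for every `i`.
For `i₀` this makes `A_{i₀} v_{i₀}` and `A_{i₀} v'_{i₀}` share the point `u + μ⁻¹ (x - v_{i₀})`,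
although `v_{i₀} ≠ v'_{i₀}` since `x ≠ y`.
-/

open Finset

section WeightedVariance

variable {E ι : Type*} [NormedAddCommGroup E] [InnerProductSpace ℝ E]

theorem sum_mul_norm_sub_sq_eq {s : Finset ι} {w : ι → ℝ} {d : ι → E}
    (hw : ∑ i ∈ s, w i = 1) :
    ∑ i ∈ s, w i * ‖d i - ∑ j ∈ s, w j • d j‖ ^ 2
      = ∑ i ∈ s, w i * ‖d i‖ ^ 2 - ‖∑ j ∈ s, w j • d j‖ ^ 2 := by
  set D := ∑ j ∈ s, w j • d j
  have hinner : ∑ i ∈ s, w i * ⟪d i, D⟫ = ‖D‖ ^ 2 := by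
    rw [← real_inner_self_eq_norm_sq, sum_inner]
    simp only [real_inner_smul_left, D]
  have hexpand : ∀ i ∈ s, w i * ‖d i - D‖ ^ 2
      = w i * ‖d i‖ ^ 2 - 2 * (w i * ⟪d i, D⟫) + w i * ‖D‖ ^ 2 := fun i _ => by
    rw [norm_sub_sq_real]; ring
  rw [sum_congr rfl hexpand, sum_add_distrib, sum_sub_distrib, ← mul_sum, ← sum_mul, hinner, hw]
  ring

theorem eq_of_norm_sq_le_inner_sum_smul {s : Finset ι} {w : ι → ℝ} {d : ι → E}
    (hw : ∀ i ∈ s, 0 < w i) (hw1 : ∑ i ∈ s, w i = 1)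
    (hd : ∀ i ∈ s, ‖d i‖ ^ 2 ≤ ⟪d i, ∑ j ∈ s, w j • d j⟫) :
    ∀ i ∈ s, d i = ∑ j ∈ s, w j • d j := by
  set D := ∑ j ∈ s, w j • d j
  have hnonneg : ∀ i ∈ s, 0 ≤ w i * ‖d i - D‖ ^ 2 := fun i hi =>
    mul_nonneg (hw i hi).le (sq_nonneg _)
  have hvar : ∑ i ∈ s, w i * ‖d i - D‖ ^ 2 ≤ 0 := by
    rw [sum_mul_norm_sub_sq_eq hw1, ← real_inner_self_eq_norm_sq (x := D)]
    conv_rhs => rw [← sub_self ⟪D, D⟫]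
    gcongr
    calc ∑ i ∈ s, w i * ‖d i‖ ^ 2 ≤ ∑ i ∈ s, w i * ⟪d i, D⟫ :=
          sum_le_sum fun i hi => mul_le_mul_of_nonneg_left (hd i hi) (hw i hi).le
      _ = ⟪D, D⟫ := by simp only [sum_inner, real_inner_smul_left, D]
  intro i hi
  have hzero := (sum_eq_zero_iff_of_nonneg hnonneg).mp (le_antisymm hvar (sum_nonneg hnonneg)) i hi
  rw [mul_eq_zero, or_iff_right (hw i hi).ne', sq_eq_zero_iff, norm_eq_zero, sub_eq_zero] at hzero
  exact hzero

end WeightedVariance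

namespace SVP

variable {E : Type*} [NormedAddCommGroup E] [InnerProductSpace ℝ E]

theorem mem_resAvg_iff {n : ℕ} {μ : ℝ} {lam : Fin n → ℝ} {A : Fin n → E → Set E} {x u : E} :
    u ∈ resAvg μ lam A x ↔
      ∃ v : Fin n → E, (∀ i, u + μ⁻¹ • (x - v i) ∈ A i (v i)) ∧ x = ∑ i, lam i • v i := by
  simp only [resAvg, sub, inv, lcomb, smul, add, id', Set.mem_ofPred_eq, Set.image_singleton,
    Set.mem_singleton_iff]
  constructor
  · rintro ⟨z, ⟨v, hv, hx⟩, _, rfl, rfl⟩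
    refine ⟨v, fun i => ?_, hx⟩
    obtain ⟨a, ha, _, rfl, hz⟩ := hv i
    convert ha using 1
    rw [smul_sub, hz]
    abel
  · rintro ⟨v, hv, hx⟩
    refine ⟨u + μ⁻¹ • x, ⟨v, fun i => ⟨_, hv i, μ⁻¹ • v i, rfl, ?_⟩, hx⟩, μ⁻¹ • x, rfl, by abel⟩
    rw [smul_sub]
    abel

theorem IsMonotone.norm_sub_sq_le_inner {A : E → Set E} (hA : IsMonotone A) {c : ℝ} (hc : 0 < c)
    {u x y v v' : E} (hv : u + c • (x - v) ∈ A v) (hv' : u + c • (y - v') ∈ A v') :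
    ‖v - v'‖ ^ 2 ≤ ⟪v - v', x - y⟫ := by
  have hmono := hA hv hv'
  have hdiff : u + c • (x - v) - (u + c • (y - v')) = c • ((x - y) - (v - v')) := by module
  rw [hdiff, real_inner_smul_right, inner_sub_right, real_inner_self_eq_norm_sq] at hmono
  linarith [nonneg_of_mul_nonneg_right hmono hc]

end SVP

theorem stmt16_general {n : ℕ} {μ : ℝ} (hμ : 0 < μ) (lam : Fin n → ℝ)
    (hpos : ∀ i, 0 < lam i) (hsum : ∑ i, lam i = 1) (A : Fin n → H → Set H)
    (hA : ∀ i, SVP.IsMaxMonotone (A i))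
    (hdi : ∃ i₀, DisjointlyInjective (A i₀)) :
    DisjointlyInjective (SVP.resAvg μ lam A) := by
  obtain ⟨i₀, hi₀⟩ := hdi
  intro x y hxy
  rw [Set.eq_empty_iff_forall_notMem]
  rintro u ⟨hux, huy⟩
  obtain ⟨v, hv, hx⟩ := SVP.mem_resAvg_iff.mp hux
  obtain ⟨v', hv', hy⟩ := SVP.mem_resAvg_iff.mp huy
  have hxy_sum : x - y = ∑ i, lam i • (v i - v' i) := by
    simp only [smul_sub, sum_sub_distrib, hx, hy]
  have hmono : ∀ i ∈ univ, ‖v i - v' i‖ ^ 2 ≤ ⟪v i - v' i, ∑ j, lam j • (v j - v' j)⟫ :=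
    fun i _ => hxy_sum ▸ (hA i).1.norm_sub_sq_le_inner (inv_pos.mpr hμ) (hv i) (hv' i)
  have hshift : v i₀ - v' i₀ = x - y :=
    hxy_sum ▸ eq_of_norm_sq_le_inner_sum_smul (fun i _ => hpos i) hsum hmono i₀ (mem_univ _)
  have hne : v i₀ ≠ v' i₀ := by
    rintro h
    rw [h, sub_self] at hshift
    exact hxy (sub_eq_zero.mp hshift.symm)
  have hsame : y - v' i₀ = x - v i₀ := (sub_eq_sub_iff_sub_eq_sub.mpr hshift.symm).symm
  have hcommon : u + μ⁻¹ • (x - v i₀) ∈ A i₀ (v i₀) ∩ A i₀ (v' i₀) := ⟨hv i₀, hsame ▸ hv' i₀⟩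
  simp [hi₀ hne] at hcommon

/-- Disjoint injectivity is dominant w.r.t. the resolvent average. -/
theorem stmt16 {n : ℕ} (hn : 0 < n) {μ : ℝ} (hμ : 0 < μ) (lam : Fin n → ℝ)
    (hpos : ∀ i, 0 < lam i) (hsum : ∑ i, lam i = 1) (A : Fin n → H → Set H)
    (hA : ∀ i, SVP.IsMaxMonotone (A i))
    (hdi : ∃ i₀, DisjointlyInjective (A i₀)) :
    DisjointlyInjective (SVP.resAvg μ lam A) :=
  stmt16_general hμ lam hpos hsum A hA hdi
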